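/- arXiv:2605.25047 — 2 statements merged into one kernel-verified Lean document; each statement's English description precedes it below -/
import Mathlib

section
/- Let X be a finite set of 2^m points (m ≥ 2) in ℂ with ∑_{x∈X}|x|² = 2^m, and let d_min > 0 be the minimum distance between distinct points of X. Then d_min² ≤ (96 + 64√2)/2^m. -/
open Finset

theorem stmt_1 (m : ℕ) (hm : 2 ≤ m) (X : Finset ℂ) (hcard : X.card = 2 ^ m)
    (hnorm : ∑ x ∈ X, ‖x‖ ^ 2 = (2 : ℝ) ^ m)
    (dmin : ℝ) (hdpos : 0 < dmin)
    (hdmin : IsLeast {d : ℝ | ∃ x ∈ X, ∃ y ∈ X, x ≠ y ∧ d = dist x y} dmin) :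
    dmin ^ 2 ≤ (96 + 64 * Real.sqrt 2) / 2 ^ m := by
  obtain ⟨-, hlow⟩ := hdmin
  simp only [mem_lowerBounds, Set.mem_setOf_eq] at hlow
  set S := X.filter (fun x => ‖x‖ ^ 2 ≤ 2) with hSdef
  have hSsub : S ⊆ X := filter_subset _ _
  -- card lower bound
  have hTcard : (2:ℝ) * ((X \ S).card) ≤ 2 ^ m := by
    have h1 : ∀ x ∈ X \ S, (2:ℝ) ≤ ‖x‖ ^ 2 := by
      intro x hx
      rw [mem_sdiff, hSdef, mem_filter] at hx
      push_neg at hx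
      exact (hx.2 hx.1).le
    have h2 : (2:ℝ) * ((X \ S).card) ≤ ∑ x ∈ X \ S, ‖x‖ ^ 2 := by
      rw [mul_comm]
      simpa using Finset.sum_le_sum h1
    have h3 : ∑ x ∈ X \ S, ‖x‖ ^ 2 ≤ ∑ x ∈ X, ‖x‖ ^ 2 :=
      Finset.sum_le_sum_of_subset_of_nonneg (sdiff_subset) (fun x _ _ => by positivity)
    linarith [hnorm ▸ h3]
  have hcardsplit : (X \ S).card = X.card - S.card := card_sdiff_of_subset hSsub
  have hSle : S.card ≤ X.card := card_le_card hSsub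
  have hScard : (2:ℝ) ^ (m-1) ≤ S.card := by
    have : ((X \ S).card : ℝ) = (X.card : ℝ) - S.card := by
      rw [hcardsplit, Nat.cast_sub hSle]
    rw [this, hcard] at hTcard
    have hpow : (2:ℝ) ^ m = 2 * 2 ^ (m-1) := by
      rw [← pow_succ']
      congr 1
      omega
    push_cast at hTcard ⊢
    nlinarith [hTcard, hpow]
  -- norms of points in S
  have hSnorm : ∀ x ∈ S, ‖x‖ ≤ Real.sqrt 2 := by
    intro x hx
    rw [hSdef, mem_filter] at hx
    nlinarith [Real.sq_sqrt (by norm_num : (0:ℝ) ≤ 2), Real.sqrt_nonneg 2, norm_nonneg x,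
      hx.2]
  -- a priori bound on dmin
  have hsqrt2 : (0:ℝ) < Real.sqrt 2 := Real.sqrt_pos.mpr (by norm_num)
  have hdle : dmin ≤ 2 * Real.sqrt 2 := by
    have h2S : 1 < S.card := by
      by_contra h
      push_neg at h
      have : (S.card : ℝ) ≤ 1 := by exact_mod_cast h
      have h4 : (2:ℝ) ≤ (2:ℝ) ^ (m-1) := by
        calc (2:ℝ) = 2 ^ 1 := (pow_one 2).symm
        _ ≤ 2 ^ (m-1) := pow_le_pow_right₀ (by norm_num) (by omega)
      linarith
    obtain ⟨x, hx, y, hy, hxy⟩ := Finset.one_lt_card.mp h2S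
    have := hlow _ ⟨x, hSsub hx, y, hSsub hy, hxy, rfl⟩
    calc dmin ≤ dist x y := this
      _ ≤ ‖x‖ + ‖y‖ := by simpa [dist_eq_norm] using norm_sub_le x y
      _ ≤ 2 * Real.sqrt 2 := by linarith [hSnorm x hx, hSnorm y hy]
  -- packing argument
  have hdisj : (↑S : Set ℂ).PairwiseDisjoint (fun x => Metric.ball x (dmin/2)) := by
    intro x hx y hy hxy
    apply Metric.ball_disjoint_ball
    have := hlow _ ⟨x, hSsub (by exact_mod_cast hx), y, hSsub (by exact_mod_cast hy), hxy, rfl⟩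
    linarith
  have hsub : (⋃ x ∈ S, Metric.ball x (dmin/2)) ⊆ Metric.ball 0 (2 * Real.sqrt 2) := by
    intro z hz
    simp only [Set.mem_iUnion, Metric.mem_ball] at hz ⊢
    obtain ⟨x, hx, hzx⟩ := hz
    have h1 : ‖x‖ ≤ Real.sqrt 2 := hSnorm x hx
    have : dist z 0 ≤ dist z x + ‖x‖ := by
      simpa [dist_eq_norm] using dist_triangle z x 0
    have hd2 : dmin / 2 ≤ Real.sqrt 2 := by linarith
    linarith
  have hvol := MeasureTheory.measure_biUnion_finset (μ := MeasureTheory.volume) hdisj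
    (fun x _ => measurableSet_ball)
  have hle : ∑ x ∈ S, MeasureTheory.volume (Metric.ball x (dmin/2))
      ≤ MeasureTheory.volume (Metric.ball (0:ℂ) (2 * Real.sqrt 2)) := by
    rw [← hvol]
    exact MeasureTheory.measure_mono hsub
  simp only [Complex.volume_ball, Finset.sum_const, nsmul_eq_mul] at hle
  have hπ0 : (NNReal.pi : ENNReal) ≠ 0 := by
    simp [NNReal.pi_ne_zero]
  have hπt : (NNReal.pi : ENNReal) ≠ ⊤ := ENNReal.coe_ne_top
  have hle2 : (S.card : ENNReal) * ENNReal.ofReal (dmin/2) ^ 2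
      ≤ ENNReal.ofReal (2 * Real.sqrt 2) ^ 2 := by
    rw [← mul_assoc] at hle
    exact (ENNReal.mul_le_mul_iff_left hπ0 hπt).mp hle
  have hle3 : ((S.card : ℝ)) * (dmin/2)^2 ≤ (2 * Real.sqrt 2)^2 := by
    have e1 : (S.card : ENNReal) * ENNReal.ofReal (dmin/2) ^ 2
        = ENNReal.ofReal ((S.card : ℝ) * (dmin/2)^2) := by
      rw [ENNReal.ofReal_mul (by positivity), ← ENNReal.ofReal_pow (by positivity),
        ENNReal.ofReal_natCast]
    have e2 : ENNReal.ofReal (2 * Real.sqrt 2) ^ 2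
        = ENNReal.ofReal ((2 * Real.sqrt 2)^2) := by
      rw [← ENNReal.ofReal_pow (by positivity)]
    rw [e1, e2] at hle2
    exact (ENNReal.ofReal_le_ofReal_iff (by positivity)).mp hle2
  -- finish
  have hsq2 : Real.sqrt 2 ^ 2 = 2 := Real.sq_sqrt (by norm_num)
  have hfin : (2:ℝ)^(m-1) * (dmin/2)^2 ≤ 8 := by
    nlinarith [hScard, sq_nonneg (dmin/2), hsq2]
  have hpow : (2:ℝ) ^ m = 2 * 2 ^ (m-1) := by
    rw [← pow_succ']
    congr 1
    omega
  have hpos : (0:ℝ) < (2:ℝ)^m := by positivity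
  rw [le_div_iff₀ hpos]
  nlinarith [hfin, hpow, hsqrt2, sq_nonneg dmin, pow_pos (show (0:ℝ) < 2 by norm_num) (m-1)]
end

section
/- If a sequence of constellations indexed by m has squared minimum distance d_min² = Θ(2^{-m}) and the entropy of the uniform input is m bits, then the capacity gap bound C(SNR) − I satisfies: there exists a constant G (independent of SNR) such that whenever m ≥ log₂(SNR), the upper bound log₂(2πe/4) + log₂((1/2^m)(1 + SNR + 16/(π d_min² SNR) + 16/(π d_min²))) is at most G. -/
open Real

theorem stmt_17 (d : ℕ → ℝ) (q₁ q₂ : ℝ) (hq₁ : 0 < q₁) (hq₂ : 0 < q₂)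
    (hlow : ∀ m : ℕ, q₁ * 2 ^ (-(m : ℝ)) ≤ d m)
    (hup : ∀ m : ℕ, d m ≤ q₂ * 2 ^ (-(m : ℝ))) :
    ∃ G : ℝ, ∀ (m : ℕ) (SNR : ℝ), 1 ≤ SNR → Real.logb 2 SNR ≤ m →
      Real.logb 2 (2 * π * Real.exp 1 / 4) +
        Real.logb 2 ((1 / 2 ^ m) *
          (1 + SNR + 16 / (π * d m * SNR) + 16 / (π * d m))) ≤ G := by
  have hπ : (0:ℝ) < π := Real.pi_pos
  refine ⟨Real.logb 2 (2 * π * Real.exp 1 / 4) +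
    Real.logb 2 (2 + 2 * (16 / (π * q₁))), ?_⟩
  intro m SNR hS hlog
  have hpm : (0:ℝ) < 2 ^ m := by positivity
  have h1m : (1:ℝ) ≤ 2 ^ m := one_le_pow₀ (by norm_num)
  have hrp : (2:ℝ) ^ (-(m:ℝ)) = ((2:ℝ)^m)⁻¹ := by
    rw [Real.rpow_neg (by norm_num), Real.rpow_natCast]
  have hdl : q₁ * ((2:ℝ)^m)⁻¹ ≤ d m := by rw [← hrp]; exact hlow m
  have hd : 0 < d m := lt_of_lt_of_le (by positivity) hdl
  have hSNR0 : (0:ℝ) < SNR := lt_of_lt_of_le one_pos hS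
  have hS2 : SNR ≤ 2 ^ m := by
    have := (Real.logb_le_iff_le_rpow (by norm_num) hSNR0).mp hlog
    rwa [Real.rpow_natCast] at this
  set c : ℝ := 16 / (π * q₁) with hc
  have hc0 : 0 < c := by positivity
  have key : 16 / (π * d m) ≤ c * 2 ^ m := by
    have h1 : 16 / (π * d m) ≤ 16 / (π * (q₁ * ((2:ℝ)^m)⁻¹)) := by
      apply div_le_div_of_nonneg_left (by norm_num) (by positivity)
      gcongr
    have h2 : 16 / (π * (q₁ * ((2:ℝ)^m)⁻¹)) = c * 2 ^ m := by
      rw [hc]; field_simp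
    linarith
  have key2 : 16 / (π * d m * SNR) ≤ c * 2 ^ m := by
    have h1 : 16 / (π * d m * SNR) ≤ 16 / (π * d m) := by
      apply div_le_div_of_nonneg_left (by norm_num) (by positivity)
      exact le_mul_of_one_le_right (by positivity) hS
    linarith
  have hsum : (1 / 2 ^ m) * (1 + SNR + 16 / (π * d m * SNR) + 16 / (π * d m))
      ≤ 2 + 2 * c := by
    rw [div_mul_eq_mul_div, one_mul, div_le_iff₀ hpm]
    have hexp : (2 + 2 * c) * 2 ^ m = 2 * 2 ^ m + 2 * (c * 2 ^ m) := by ring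
    rw [hexp]
    linarith
  have hpos : 0 < (1 / (2:ℝ) ^ m) * (1 + SNR + 16 / (π * d m * SNR) + 16 / (π * d m)) := by
    positivity
  have := Real.logb_le_logb_of_le (b := 2) (by norm_num) hpos hsum
  linarith
end
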